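/- arXiv:2501.02475 — 8 statements merged into one kernel-verified Lean document; each statement's English description precedes it below -/
import Mathlib

section
/- Let f : ℝ^p → ℝ be convex and differentiable, and let H be a (fixed) symmetric positive definite p×p matrix such that the quadratic surrogate majorization f(α) ≤ f(β) + ∇f(β)ᵀ(α − β) + (1/2)(α − β)ᵀ H (α − β) holds for all α, β ∈ ℝ^p. Assume the set of stationary points {β : ∇f(β) = 0} is nonempty. Then for any starting point β₀, the MM iterates β_{m+1} = β_m − H⁻¹ ∇f(β_m) converge to a point β* with ∇f(β*) = 0, which (by convexity) is a global minimum point of f. -/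
/-!
Convexity and the quadratic majorization together make `∇f` co-coercive with respect to `H⁻¹`:
`½ ⟪∇f x - ∇f y, H⁻¹ (∇f x - ∇f y)⟫ ≤ f x - f y - ⟪∇f y, x - y⟫`.
Co-coercivity makes `x ↦ H⁻¹ ∇f x` continuous and the iterates Fejér monotone, in the norm of `H`,
with respect to every stationary point; the descent inequality
`f β_{m+1} + ½ ⟪∇f β_m, H⁻¹ ∇f β_m⟫ ≤ f β_m` forces the steps `H⁻¹ ∇f β_m` to zero. So the bounded
sequence of iterates has a cluster point, it is stationary, and Fejér monotonicity with respect to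
it makes the whole sequence converge to it.
-/

open Set Filter Topology Matrix
open scoped RealInnerProductSpace Gradient

section InnerProductSpace

variable {E : Type*} [NormedAddCommGroup E] [InnerProductSpace ℝ E]

theorem ConvexOn.add_inner_gradient_le [CompleteSpace E] {f : E → ℝ}
    (hf : ConvexOn ℝ univ f) {x : E} (hx : DifferentiableAt ℝ f x) (y : E) :
    f x + ⟪∇ f x, y - x⟫ ≤ f y := by
  let L := AffineMap.lineMap (k := ℝ) x y
  have hderiv : HasDerivAt (f ∘ L) ⟪∇ f x, y - x⟫ 0 := by
    have hL : HasDerivAt L (y - x) 0 := AffineMap.hasDerivAt_lineMap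
    have hfx : HasFDerivAt f (fderiv ℝ f x) (L 0) := by
      simpa [L] using hx.hasFDerivAt
    simpa [inner_gradient_left] using hfx.comp_hasDerivAt 0 hL
  have hslope := (hf.comp_affineMap L).le_slope_of_hasDerivAt trivial trivial one_pos hderiv
  simp only [slope_def_field, Function.comp_apply, L, AffineMap.lineMap_apply_zero,
    AffineMap.lineMap_apply_one, sub_zero, div_one] at hslope
  linarith

theorem ConvexOn.le_of_gradient_eq_zero [CompleteSpace E] {f : E → ℝ}
    (hf : ConvexOn ℝ univ f) {x : E} (hx : DifferentiableAt ℝ f x) (hgrad : ∇ f x = 0) (y : E) :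
    f x ≤ f y := by
  simpa [hgrad] using hf.add_inner_gradient_le hx y

theorem exists_pos_mul_sq_norm_le_inner [FiniteDimensional ℝ E] (A : E →L[ℝ] E)
    (hA : ∀ v ≠ 0, 0 < ⟪v, A v⟫) : ∃ c > 0, ∀ v, c * ‖v‖ ^ 2 ≤ ⟪v, A v⟫ := by
  rcases subsingleton_or_nontrivial E with hE | hE
  · exact ⟨1, one_pos, fun v => by simp [Subsingleton.elim v 0]⟩
  obtain ⟨u₀, hu₀, hmin⟩ := (isCompact_sphere (0 : E) 1).exists_isMinOn
    (NormedSpace.sphere_nonempty.mpr zero_le_one)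
    (by fun_prop : Continuous fun v => ⟪v, A v⟫).continuousOn
  refine ⟨⟪u₀, A u₀⟫, hA u₀ (ne_zero_of_mem_unit_sphere ⟨u₀, hu₀⟩), fun v => ?_⟩
  rcases eq_or_ne v 0 with rfl | hv
  · simp
  have hu : ‖v‖⁻¹ • v ∈ Metric.sphere (0 : E) 1 := by simp [norm_smul, hv]
  have hscale : ⟪v, A v⟫ = ‖v‖ ^ 2 * ⟪‖v‖⁻¹ • v, A (‖v‖⁻¹ • v)⟫ := by
    have hn : ‖v‖ ≠ 0 := norm_ne_zero_iff.mpr hv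
    simp only [map_smul, inner_smul_left, inner_smul_right, conj_trivial]
    field_simp
  rw [hscale, mul_comm]
  exact mul_le_mul_of_nonneg_left (hmin hu) (sq_nonneg _)

theorem norm_le_sqrt_of_inner_le {A : E →L[ℝ] E} {c : ℝ} (hc : 0 < c)
    (hcoer : ∀ v, c * ‖v‖ ^ 2 ≤ ⟪v, A v⟫) {v : E} {R : ℝ} (hv : ⟪v, A v⟫ ≤ R) :
    ‖v‖ ≤ √(R / c) := by
  refine Real.le_sqrt_of_sq_le ?_
  rw [le_div_iff₀ hc, mul_comm]
  exact (hcoer v).trans hv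

theorem tendsto_zero_of_tendsto_inner_self {A : E →L[ℝ] E} {c : ℝ} (hc : 0 < c)
    (hcoer : ∀ v, c * ‖v‖ ^ 2 ≤ ⟪v, A v⟫) {ι : Type*} {l : Filter ι} {v : ι → E}
    (hv : Tendsto (fun i => ⟪v i, A (v i)⟫) l (𝓝 0)) : Tendsto v l (𝓝 0) := by
  have hsq : Tendsto (fun i => ‖v i‖ ^ 2) l (𝓝 0) := by
    refine squeeze_zero (fun i => sq_nonneg _) (fun i => ?_) (by simpa using hv.div_const c)
    rw [le_div_iff₀ hc, mul_comm]
    exact hcoer (v i)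
  exact tendsto_zero_iff_norm_tendsto_zero.mpr (by simpa using hsq.sqrt)

theorem inner_self_apply_right_inverse {A B : E →L[ℝ] E} (hAB : ∀ v, A (B v) = v) (g : E) :
    ⟪B g, A (B g)⟫ = ⟪g, B g⟫ := by
  rw [hAB, real_inner_comm]

variable [CompleteSpace E] {f : E → ℝ} {A B : E →L[ℝ] E} {c : ℝ}

def HasQuadraticMajorant (f : E → ℝ) (A : E →L[ℝ] E) : Prop :=
  ∀ x y, f x ≤ f y + ⟪∇ f y, x - y⟫ + 1 / 2 * ⟪x - y, A (x - y)⟫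

noncomputable def mmStep (f : E → ℝ) (B : E →L[ℝ] E) (x : E) : E := x - B (∇ f x)

/-- Compare the majorant at `x` with the tangent minorant at `y`, both evaluated at
`x - B (∇f x - ∇f y)`. -/
theorem half_inner_gradient_sub_le (hf : ConvexOn ℝ univ f) (hdiff : Differentiable ℝ f)
    (hmaj : HasQuadraticMajorant f A) (hAB : ∀ v, A (B v) = v) (x y : E) :
    1 / 2 * ⟪∇ f x - ∇ f y, B (∇ f x - ∇ f y)⟫ ≤ f x - f y - ⟪∇ f y, x - y⟫ := by
  set d := ∇ f x - ∇ f y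
  have hupper := hmaj (x - B d) x
  have hlower := hf.add_inner_gradient_le (hdiff y) (x - B d)
  rw [show x - B d - x = -B d by abel, map_neg, inner_neg_neg, inner_self_apply_right_inverse hAB,
    inner_neg_right] at hupper
  rw [show x - B d - y = (x - y) - B d by abel, inner_sub_right] at hlower
  have hsplit : ⟪d, B d⟫ = ⟪∇ f x, B d⟫ - ⟪∇ f y, B d⟫ := inner_sub_left _ _ _
  linarith

theorem apply_mmStep_add_le (hmaj : HasQuadraticMajorant f A) (hAB : ∀ v, A (B v) = v) (x : E) :
    f (mmStep f B x) + 1 / 2 * ⟪∇ f x, B (∇ f x)⟫ ≤ f x := by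
  rw [mmStep]
  have h := hmaj (x - B (∇ f x)) x
  rw [sub_sub_cancel_left, map_neg, inner_neg_neg, inner_self_apply_right_inverse hAB,
    inner_neg_right] at h
  linarith

theorem inner_mmStep_sub_le (hf : ConvexOn ℝ univ f) (hdiff : Differentiable ℝ f)
    (hmaj : HasQuadraticMajorant f A) (hAB : ∀ v, A (B v) = v)
    (hA : (A : E →ₗ[ℝ] E).IsSymmetric) {z : E} (hz : ∇ f z = 0) (x : E) :
    ⟪mmStep f B x - z, A (mmStep f B x - z)⟫ ≤ ⟪x - z, A (x - z)⟫ := by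
  have hexpand : ⟪mmStep f B x - z, A (mmStep f B x - z)⟫
      = ⟪x - z, A (x - z)⟫ - 2 * ⟪∇ f x, x - z⟫ + ⟪∇ f x, B (∇ f x)⟫ := by
    have hsymm : ⟪B (∇ f x), A (x - z)⟫ = ⟪∇ f x, x - z⟫ := by
      simpa [hAB] using (hA (B (∇ f x)) (x - z)).symm
    rw [mmStep, sub_right_comm, map_sub, inner_sub_left, inner_sub_right, inner_sub_right,
      inner_self_apply_right_inverse hAB, hsymm, hAB, real_inner_comm (x - z)]
    ring
  have hcocoercive := half_inner_gradient_sub_le hf hdiff hmaj hAB z x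
  rw [hz, zero_sub, map_neg, inner_neg_neg, ← neg_sub x z, inner_neg_right] at hcocoercive
  linarith [hf.le_of_gradient_eq_zero (hdiff z) hz x]

theorem continuous_apply_gradient (hf : ConvexOn ℝ univ f) (hdiff : Differentiable ℝ f)
    (hmaj : HasQuadraticMajorant f A) (hAB : ∀ v, A (B v) = v) (hc : 0 < c)
    (hcoer : ∀ v, c * ‖v‖ ^ 2 ≤ ⟪v, A v⟫) :
    Continuous fun x => B (∇ f x) := by
  refine continuous_iff_continuousAt.mpr fun y => ?_
  rw [ContinuousAt, ← tendsto_sub_nhds_zero_iff]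
  refine tendsto_zero_of_tendsto_inner_self hc hcoer ?_
  have hbregman : Tendsto (fun x => 2 * (f x - f y - ⟪∇ f y, x - y⟫)) (𝓝 y) (𝓝 0) := by
    have : Continuous fun x => 2 * (f x - f y - ⟪∇ f y, x - y⟫) := by
      have := hdiff.continuous
      fun_prop
    simpa using this.tendsto y
  refine squeeze_zero (fun x => (mul_nonneg hc.le (sq_nonneg _)).trans (hcoer _))
    (fun x => ?_) hbregman
  rw [← map_sub, inner_self_apply_right_inverse hAB]
  linarith [half_inner_gradient_sub_le hf hdiff hmaj hAB x y]

theorem tendsto_apply_gradient_iterate_zero (hmaj : HasQuadraticMajorant f A)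
    (hAB : ∀ v, A (B v) = v) (hc : 0 < c) (hcoer : ∀ v, c * ‖v‖ ^ 2 ≤ ⟪v, A v⟫)
    (hbdd : BddBelow (range f)) {x : ℕ → E} (hx : ∀ m, x (m + 1) = mmStep f B (x m)) :
    Tendsto (fun m => B (∇ f (x m))) atTop (𝓝 0) := by
  have hdescent m : f (x (m + 1)) + 1 / 2 * ⟪∇ f (x m), B (∇ f (x m))⟫ ≤ f (x m) :=
    hx m ▸ apply_mmStep_add_le hmaj hAB (x m)
  have hnonneg m : 0 ≤ ⟪∇ f (x m), B (∇ f (x m))⟫ := by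
    rw [← inner_self_apply_right_inverse hAB]
    exact (mul_nonneg hc.le (sq_nonneg _)).trans (hcoer _)
  have hanti : Antitone (f ∘ x) :=
    antitone_nat_of_succ_le fun m => show f (x (m + 1)) ≤ f (x m) by
      linarith [hdescent m, hnonneg m]
  have hlim := tendsto_atTop_ciInf hanti (hbdd.mono (range_comp_subset_range x f))
  have hgap : Tendsto (fun m => 2 * (f (x m) - f (x (m + 1)))) atTop (𝓝 0) := by
    simpa using (hlim.sub (hlim.comp (tendsto_add_atTop_nat 1))).const_mul 2
  refine tendsto_zero_of_tendsto_inner_self hc hcoer ?_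
  simp_rw [inner_self_apply_right_inverse hAB]
  exact squeeze_zero hnonneg (fun m => by linarith [hdescent m]) hgap

theorem exists_tendsto_mm_iterate [FiniteDimensional ℝ E] (hf : ConvexOn ℝ univ f)
    (hdiff : Differentiable ℝ f) (hmaj : HasQuadraticMajorant f A) (hAB : ∀ v, A (B v) = v)
    (hA : (A : E →ₗ[ℝ] E).IsSymmetric) (hc : 0 < c) (hcoer : ∀ v, c * ‖v‖ ^ 2 ≤ ⟪v, A v⟫)
    {z : E} (hz : ∇ f z = 0) {x : ℕ → E} (hx : ∀ m, x (m + 1) = mmStep f B (x m)) :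
    ∃ x', Tendsto x atTop (𝓝 x') ∧ ∇ f x' = 0 := by
  have hfejer {z} (hz : ∇ f z = 0) : Antitone fun m => ⟪x m - z, A (x m - z)⟫ :=
    antitone_nat_of_succ_le fun m => hx m ▸ inner_mmStep_sub_le hf hdiff hmaj hAB hA hz (x m)
  have hbounded m : x m ∈ Metric.closedBall z √(⟪x 0 - z, A (x 0 - z)⟫ / c) :=
    mem_closedBall_iff_norm.mpr <| norm_le_sqrt_of_inner_le hc hcoer (hfejer hz (Nat.zero_le m))
  obtain ⟨x', -, φ, hφ, hsub⟩ := (isCompact_closedBall _ _).tendsto_subseq hbounded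
  have hbdd : BddBelow (range f) :=
    ⟨f z, forall_mem_range.mpr (hf.le_of_gradient_eq_zero (hdiff z) hz)⟩
  have hstep : B (∇ f x') = 0 := tendsto_nhds_unique
    ((continuous_apply_gradient hf hdiff hmaj hAB hc hcoer).continuousAt.tendsto.comp hsub)
    ((tendsto_apply_gradient_iterate_zero hmaj hAB hc hcoer hbdd hx).comp hφ.tendsto_atTop)
  have hx' : ∇ f x' = 0 := by rw [← hAB (∇ f x'), hstep, map_zero]
  refine ⟨x', ?_, hx'⟩
  rw [← tendsto_sub_nhds_zero_iff]
  refine tendsto_zero_of_tendsto_inner_self hc hcoer ?_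
  rw [tendsto_iff_tendsto_subseq_of_antitone (hfejer hx') hφ.tendsto_atTop]
  have hcont : Continuous fun v => ⟪v - x', A (v - x')⟫ := by fun_prop
  have hlim := (hcont.tendsto x').comp hsub
  rwa [sub_self, map_zero, inner_zero_left] at hlim

end InnerProductSpace

theorem Matrix.PosDef.inner_toEuclideanCLM_pos {n : Type*} [Fintype n] [DecidableEq n]
    {H : Matrix n n ℝ} (hH : H.PosDef) {v : EuclideanSpace ℝ n} (hv : v ≠ 0) :
    0 < ⟪v, toEuclideanCLM (𝕜 := ℝ) H v⟫ := by
  simpa [inner_toEuclideanCLM] using hH.re_dotProduct_pos (x := v.ofLp) (by simpa using hv)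

theorem Matrix.toEuclideanCLM_apply_toEuclideanCLM_inv {𝕜 n : Type*} [RCLike 𝕜] [Fintype n]
    [DecidableEq n] {H : Matrix n n 𝕜} (hH : IsUnit H) (v : EuclideanSpace 𝕜 n) :
    toEuclideanCLM (𝕜 := 𝕜) H (toEuclideanCLM (𝕜 := 𝕜) H⁻¹ v) = v := by
  change (toEuclideanCLM (𝕜 := 𝕜) H * toEuclideanCLM (𝕜 := 𝕜) H⁻¹) v = v
  rw [← map_mul, mul_nonsing_inv _ ((isUnit_iff_isUnit_det H).mp hH), map_one]
  rfl

theorem mm_fixed_curvature_convergence_general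
    (p : ℕ) (f : EuclideanSpace ℝ (Fin p) → ℝ)
    (hconv : ConvexOn ℝ Set.univ f)
    (hdiff : Differentiable ℝ f)
    (H : Matrix (Fin p) (Fin p) ℝ)
    (hpd : H.PosDef)
    (hmaj : ∀ α β : EuclideanSpace ℝ (Fin p),
      f α ≤ f β + (inner ℝ (gradient f β) (α - β) : ℝ) +
        (1 / 2) * ((WithLp.equiv 2 (Fin p → ℝ)) (α - β) ⬝ᵥ
          H.mulVec ((WithLp.equiv 2 (Fin p → ℝ)) (α - β))))
    (hstat : ∃ β : EuclideanSpace ℝ (Fin p), gradient f β = 0)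
    (β : ℕ → EuclideanSpace ℝ (Fin p))
    (hiter : ∀ m, β (m + 1) = β m -
      (WithLp.equiv 2 (Fin p → ℝ)).symm
        (H⁻¹.mulVec ((WithLp.equiv 2 (Fin p → ℝ)) (gradient f (β m))))) :
    ∃ βstar : EuclideanSpace ℝ (Fin p),
      Filter.Tendsto β Filter.atTop (nhds βstar) ∧
      gradient f βstar = 0 ∧
      ∀ x, f βstar ≤ f x := by
  let A := toEuclideanCLM (𝕜 := ℝ) H
  have hA : (A : EuclideanSpace ℝ (Fin p) →ₗ[ℝ] _).IsSymmetric :=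
    isSymmetric_toEuclideanLin_iff.mpr hpd.isHermitian
  obtain ⟨c, hc, hcoer⟩ := exists_pos_mul_sq_norm_le_inner A fun v => hpd.inner_toEuclideanCLM_pos
  have hmajA : HasQuadraticMajorant f A := fun x y => by
    rw [inner_toEuclideanCLM]
    exact hmaj x y
  obtain ⟨z, hz⟩ := hstat
  obtain ⟨βstar, hlim, hstar⟩ := exists_tendsto_mm_iterate hconv hdiff hmajA
    (toEuclideanCLM_apply_toEuclideanCLM_inv hpd.isUnit) hA hc hcoer hz hiter
  exact ⟨βstar, hlim, hstar, hconv.le_of_gradient_eq_zero (hdiff βstar) hstar⟩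

/-- Convergence of fixed-curvature MM iterates for a convex differentiable
function: if `H` is symmetric positive definite, the quadratic surrogate with
curvature `H` majorizes `f`, and the set of stationary points is nonempty,
then the iterates `β_{m+1} = β_m - H⁻¹ ∇f(β_m)` converge to a stationary
point, which is a global minimum of `f`. -/
theorem mm_fixed_curvature_convergence
    (p : ℕ) (f : EuclideanSpace ℝ (Fin p) → ℝ)
    (hconv : ConvexOn ℝ Set.univ f)
    (hdiff : Differentiable ℝ f)
    (H : Matrix (Fin p) (Fin p) ℝ)
    (hsymm : H.IsSymm) (hpd : H.PosDef)
    (hmaj : ∀ α β : EuclideanSpace ℝ (Fin p),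
      f α ≤ f β + (inner ℝ (gradient f β) (α - β) : ℝ) +
        (1 / 2) * ((WithLp.equiv 2 (Fin p → ℝ)) (α - β) ⬝ᵥ
          H.mulVec ((WithLp.equiv 2 (Fin p → ℝ)) (α - β))))
    (hstat : ∃ β : EuclideanSpace ℝ (Fin p), gradient f β = 0)
    (β : ℕ → EuclideanSpace ℝ (Fin p))
    (hiter : ∀ m, β (m + 1) = β m -
      (WithLp.equiv 2 (Fin p → ℝ)).symm
        (H⁻¹.mulVec ((WithLp.equiv 2 (Fin p → ℝ)) (gradient f (β m))))) :
    ∃ βstar : EuclideanSpace ℝ (Fin p),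
      Filter.Tendsto β Filter.atTop (nhds βstar) ∧
      gradient f βstar = 0 ∧
      ∀ x, f βstar ≤ f x :=
  mm_fixed_curvature_convergence_general p f hconv hdiff H hpd hmaj hstat β hiter
end

section
/- Let f : ℝ^p → ℝ be μ-strongly convex and differentiable, attaining its global minimum at α. Suppose that for every anchor point β̄ ∈ ℝ^p there is a differentiable surrogate g(· | β̄) : ℝ^p → ℝ satisfying: (i) majorization g(β | β̄) ≥ f(β) for all β, (ii) tangency g(β̄ | β̄) = f(β̄) and ∇g(β̄ | β̄) = ∇f(β̄), and (iii) the uniform Lipschitz condition ‖∇g(γ | β̄) − ∇g(δ | β̄)‖ ≤ L‖γ − δ‖ for all γ, δ, β̄ (with one constant L). If β_{m+1} is a global minimizer of g(· | β_m) for each m, then f(β_m) − f(α) ≤ [1 − (μ/(2L))²]^m · [f(β₀) − f(α)] for all m, so f(β_m) converges to f(α) at a linear rate. -/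
/-!
Strong convexity gives the Polyak–Łojasiewicz inequality `‖∇f b‖² ≥ 2μ (f b - f α)`.
The surrogate at `b` is tangent to `f` and has an `L`-Lipschitz gradient, so the gradient step
`b - ∇f b / (2L)` brings it down to at most `f b - ‖∇f b‖² / (4L)`; the MM iterate does at least
as well on the surrogate, and majorization transfers this to `f`. Hence the optimality gap
contracts by the factor `1 - μ/(2L)` at every step.
-/

open Set
open scoped RealInnerProductSpace Gradient

lemma ConvexOn.add_fderiv_sub_le {F : Type*} [NormedAddCommGroup F] [NormedSpace ℝ F]
    {s : Set F} {φ : F → ℝ} {x y : F} (hφ : ConvexOn ℝ s φ) (hd : DifferentiableAt ℝ φ x)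
    (hx : x ∈ s) (hy : y ∈ s) :
    φ x + fderiv ℝ φ x (y - x) ≤ φ y := by
  set ℓ : ℝ →ᵃ[ℝ] F := AffineMap.lineMap x y
  have h0 : ℓ 0 = x := AffineMap.lineMap_apply_zero x y
  have h1 : ℓ 1 = y := AffineMap.lineMap_apply_one x y
  have hdℓ : HasFDerivAt φ (fderiv ℝ φ x) (ℓ 0) := h0 ▸ hd.hasFDerivAt
  have hderiv : HasDerivAt (φ ∘ ℓ) (fderiv ℝ φ x (y - x)) 0 :=
    hdℓ.comp_hasDerivAt 0 AffineMap.hasDerivAt_lineMap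
  have hslope := (hφ.comp_affineMap ℓ).le_slope_of_hasDerivAt (by simpa [h0] using hx)
    (by simpa [h1] using hy) zero_lt_one hderiv
  simp only [slope_def_field, Function.comp_apply, h0, h1, sub_zero, div_one] at hslope
  linarith

section InnerProductSpace

variable {E : Type*} [NormedAddCommGroup E] [InnerProductSpace ℝ E] [CompleteSpace E]
  {f : E → ℝ} {s : Set E} {μ L : ℝ} {x y : E}

lemma StrongConvexOn.add_inner_gradient_add_le (hf : StrongConvexOn s μ f)
    (hd : DifferentiableAt ℝ f x) (hx : x ∈ s) (hy : y ∈ s) :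
    f x + ⟪∇ f x, y - x⟫ + μ / 2 * ‖y - x‖ ^ 2 ≤ f y := by
  have hderiv : HasFDerivAt (fun z ↦ f z - μ / 2 * ‖z‖ ^ 2)
      (fderiv ℝ f x - (μ / 2) • 2 • innerSL ℝ x) x :=
    hd.hasFDerivAt.sub ((hasStrictFDerivAt_norm_sq x).hasFDerivAt.const_mul _)
  have hφ := (strongConvexOn_iff_convex.mp hf).add_fderiv_sub_le hderiv.differentiableAt hx hy
  simp only [hderiv.fderiv, sub_apply, smul_apply,
    innerSL_apply_apply, ← inner_gradient_left, smul_eq_mul, nsmul_eq_mul] at hφ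
  have hsq : ‖y - x‖ ^ 2 = ‖y‖ ^ 2 - ‖x‖ ^ 2 - 2 * ⟪x, y - x⟫ := by
    rw [norm_sub_sq_real, inner_sub_right, real_inner_self_eq_norm_sq, real_inner_comm]; ring
  rw [hsq]
  linarith

lemma StrongConvexOn.mul_sub_le_norm_gradient_sq {a : E} (hf : StrongConvexOn s μ f) (hμ : 0 < μ)
    (hd : DifferentiableAt ℝ f x) (hx : x ∈ s) (ha : a ∈ s) :
    2 * μ * (f x - f a) ≤ ‖∇ f x‖ ^ 2 := by
  have hfa := hf.add_inner_gradient_add_le hd hx ha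
  have hcs := neg_le_of_abs_le (abs_real_inner_le_norm (∇ f x) (a - x))
  nlinarith [sq_nonneg (‖∇ f x‖ - μ * ‖a - x‖), norm_nonneg (a - x), norm_nonneg (∇ f x)]

lemma image_le_add_inner_gradient_add_mul_norm_sq {h : E → ℝ} (hd : Differentiable ℝ h)
    (hL : 0 ≤ L) (hlip : ∀ z, ‖∇ h z - ∇ h x‖ ≤ L * ‖z - x‖) :
    h y ≤ h x + ⟪∇ h x, y - x⟫ + L * ‖y - x‖ ^ 2 := by
  have hmvt : ‖h y - h x - fderiv ℝ h x (y - x)‖ ≤ L * ‖y - x‖ * ‖y - x‖ := by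
    refine (convex_closedBall x ‖y - x‖).norm_image_sub_le_of_norm_fderiv_le'
      (fun z _ ↦ hd z) (fun z hz ↦ ?_) (Metric.mem_closedBall_self (norm_nonneg _))
      (by simp [dist_eq_norm])
    rw [← toDual_gradient, ← toDual_gradient, ← map_sub, LinearIsometryEquiv.norm_map]
    exact (hlip z).trans (mul_le_mul_of_nonneg_left (by simpa [dist_eq_norm] using hz) hL)
  rw [← inner_gradient_left, Real.norm_eq_abs] at hmvt
  nlinarith [le_abs_self (h y - h x - ⟪∇ h x, y - x⟫)]

lemma image_sub_smul_gradient_le {h : E → ℝ} (hd : Differentiable ℝ h) (hL : 0 < L)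
    (hlip : ∀ z, ‖∇ h z - ∇ h x‖ ≤ L * ‖z - x‖) :
    h (x - (2 * L)⁻¹ • ∇ h x) ≤ h x - ‖∇ h x‖ ^ 2 / (4 * L) := by
  have hdesc :=
    image_le_add_inner_gradient_add_mul_norm_sq (y := x - (2 * L)⁻¹ • ∇ h x) hd hL.le hlip
  rw [sub_sub_cancel_left, inner_neg_right, real_inner_smul_right, real_inner_self_eq_norm_sq,
    norm_neg, norm_smul, mul_pow, Real.norm_eq_abs, sq_abs] at hdesc
  convert hdesc using 1
  field_simp
  ring

lemma le_sub_norm_gradient_sq_of_tangent_majorant {f g : E → ℝ} {b b' : E} (hL : 0 < L)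
    (hgd : Differentiable ℝ g) (hmaj : f b' ≤ g b') (htan : g b = f b)
    (htangrad : ∇ g b = ∇ f b) (hlip : ∀ z, ‖∇ g z - ∇ g b‖ ≤ L * ‖z - b‖)
    (hmin : ∀ z, g b' ≤ g z) :
    f b' ≤ f b - ‖∇ f b‖ ^ 2 / (4 * L) := by
  have hstep := image_sub_smul_gradient_le hgd hL hlip
  rw [htan, htangrad] at hstep
  exact hmaj.trans ((hmin _).trans hstep)

end InnerProductSpace

lemma le_one_sub_sq_pow_mul_of_le_one_sub_mul {e : ℕ → ℝ} {t : ℝ} (ht : 0 ≤ t)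
    (he : ∀ m, 0 ≤ e m) (hstep : ∀ m, e (m + 1) ≤ (1 - t) * e m) (m : ℕ) :
    e m ≤ (1 - t ^ 2) ^ m * e 0 := by
  rcases le_or_gt t 1 with ht1 | ht1
  · induction m with
    | zero => simp
    | succ m ih =>
      calc e (m + 1) ≤ (1 - t) * e m := hstep m
        _ ≤ (1 - t ^ 2) * e m := mul_le_mul_of_nonneg_right (by nlinarith) (he m)
        _ ≤ (1 - t ^ 2) * ((1 - t ^ 2) ^ m * e 0) := by gcongr; nlinarith
        _ = (1 - t ^ 2) ^ (m + 1) * e 0 := by ring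
  · -- a factor `1 - t < 0` forces `e = 0`
    have hzero : ∀ n, e n = 0 := fun n ↦
      le_antisymm (by nlinarith [hstep n, he (n + 1), he n]) (he n)
    simp [hzero]

/-- Linear convergence of MM iterates for a strongly convex objective:
if `f` is `μ`-strongly convex and differentiable with global minimum at `α`,
each surrogate `g b̄` majorizes `f`, touches it in value and gradient at its
anchor `b̄`, has an `L`-Lipschitz gradient uniformly in `b̄`, and each iterate
minimizes the current surrogate, then
`f(β_m) - f(α) ≤ [1 - (μ/(2L))²]^m [f(β₀) - f(α)]`. -/
theorem mm_linear_convergence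
    (p : ℕ) (μ L : ℝ) (hμ : 0 < μ) (hL : 0 < L)
    (f : EuclideanSpace ℝ (Fin p) → ℝ)
    (hsc : StrongConvexOn Set.univ μ f)
    (hdiff : Differentiable ℝ f)
    (α : EuclideanSpace ℝ (Fin p))
    (hmin : ∀ x, f α ≤ f x)
    (g : EuclideanSpace ℝ (Fin p) → EuclideanSpace ℝ (Fin p) → ℝ)
    (hgdiff : ∀ banchor, Differentiable ℝ (g banchor))
    (hmaj : ∀ banchor x, f x ≤ g banchor x)
    (htan : ∀ banchor, g banchor banchor = f banchor)
    (htangrad : ∀ banchor, gradient (g banchor) banchor = gradient f banchor)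
    (hlip : ∀ banchor γ δ,
      ‖gradient (g banchor) γ - gradient (g banchor) δ‖ ≤ L * ‖γ - δ‖)
    (β : ℕ → EuclideanSpace ℝ (Fin p))
    (hiter : ∀ m, ∀ x, g (β m) (β (m + 1)) ≤ g (β m) x) :
    ∀ m : ℕ, f (β m) - f α ≤ (1 - (μ / (2 * L)) ^ 2) ^ m * (f (β 0) - f α) := by
  have hcontract : ∀ m, f (β (m + 1)) - f α ≤ (1 - μ / (2 * L)) * (f (β m) - f α) := by
    intro m
    have hdesc := le_sub_norm_gradient_sq_of_tangent_majorant hL (hgdiff (β m)) (hmaj _ _)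
      (htan _) (htangrad _) (fun z ↦ hlip _ z _) (hiter m)
    have hPL := hsc.mul_sub_le_norm_gradient_sq hμ (hdiff (β m)) (mem_univ _) (mem_univ α)
    calc f (β (m + 1)) - f α ≤ f (β m) - f α - ‖∇ f (β m)‖ ^ 2 / (4 * L) := by linarith
      _ ≤ f (β m) - f α - 2 * μ * (f (β m) - f α) / (4 * L) := by gcongr
      _ = (1 - μ / (2 * L)) * (f (β m) - f α) := by field_simp; ring
  exact le_one_sub_sq_pow_mul_of_le_one_sub_mul (by positivity) (fun m ↦ sub_nonneg.2 (hmin _))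
    hcontract
end

section
/- Let f : ℝ^p → ℝ be differentiable and attain its minimum at a point β_∞. Suppose that for every anchor β̄ ∈ ℝ^p there is a differentiable surrogate g(· | β̄) with: (i) g(β | β̄) ≥ f(β) for all β, (ii) g(β̄ | β̄) = f(β̄) and ∇g(β̄ | β̄) = ∇f(β̄), and (iii) ‖∇g(γ | β̄) − ∇g(δ | β̄)‖ ≤ L‖γ − δ‖ for all γ, δ, β̄. If β_{k+1} is a global minimizer of g(· | β_k) for each k, then for every m, Σ_{k=0}^{m} ‖∇f(β_k)‖² ≤ 2L [f(β₀) − f(β_∞)]. Consequently lim_{m→∞} ‖∇f(β_m)‖ = 0. -/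
/-!
An `L`-smooth function lies below its quadratic model `h x + ⟪∇h x, y - x⟫ + L/2 ‖y - x‖²`, so
its minimum value is at most `h x - ‖∇h x‖² / (2L)`. Applied to the surrogate anchored at `β_k`,
which agrees with `f` to first order at `β_k` and majorizes `f`, this makes every MM step decrease
`f` by at least `‖∇f(β_k)‖² / (2L)`. The decreases telescope, and `f` is bounded below by
`f(β_∞)`, so the squared gradient norms have bounded partial sums and hence tend to zero.
-/

open Filter Topology Finset InnerProductSpace
open scoped Gradient RealInnerProductSpace

section Smooth

variable {E : Type*} [NormedAddCommGroup E] [InnerProductSpace ℝ E] [CompleteSpace E]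
  {h : E → ℝ} {L : ℝ}

theorem Differentiable.le_add_inner_gradient_add_sq (hd : Differentiable ℝ h)
    (hlip : ∀ a b, ‖∇ h a - ∇ h b‖ ≤ L * ‖a - b‖) (x y : E) :
    h y ≤ h x + ⟪∇ h x, y - x⟫ + L / 2 * ‖y - x‖ ^ 2 := by
  set v := y - x
  -- `φ` is antitone on `[0, ∞)` because `t ↦ ⟪∇ h (x + t • v), v⟫` grows at most like `L t ‖v‖²`.
  set φ : ℝ → ℝ := fun t => h (x + t • v) - t * ⟪∇ h x, v⟫ - L / 2 * t ^ 2 * ‖v‖ ^ 2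
  have hφ : ∀ t, HasDerivAt φ (⟪∇ h (x + t • v), v⟫ - ⟪∇ h x, v⟫ - L * t * ‖v‖ ^ 2) t := by
    intro t
    have hline : HasDerivAt (fun s : ℝ => x + s • v) v t := by
      simpa using ((hasDerivAt_id t).smul_const v).const_add x
    have := ((hd _).hasGradientAt.hasFDerivAt.comp_hasDerivAt t hline).sub
      ((hasDerivAt_id t).mul_const ⟪∇ h x, v⟫) |>.sub
      (((hasDerivAt_pow 2 t).const_mul (L / 2)).mul_const (‖v‖ ^ 2))
    refine this.congr_deriv ?_
    rw [toDual_apply_apply]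
    ring
  have hslope : ∀ t, 0 ≤ t → ⟪∇ h (x + t • v), v⟫ - ⟪∇ h x, v⟫ ≤ L * t * ‖v‖ ^ 2 := by
    intro t ht
    calc ⟪∇ h (x + t • v), v⟫ - ⟪∇ h x, v⟫ = ⟪∇ h (x + t • v) - ∇ h x, v⟫ :=
          (inner_sub_left _ _ _).symm
      _ ≤ ‖∇ h (x + t • v) - ∇ h x‖ * ‖v‖ := real_inner_le_norm _ _
      _ ≤ L * (t * ‖v‖) * ‖v‖ := by
          gcongr
          simpa [norm_smul, abs_of_nonneg ht] using hlip (x + t • v) x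
      _ = L * t * ‖v‖ ^ 2 := by ring
  have hanti : AntitoneOn φ (Set.Ici 0) :=
    antitoneOn_of_hasDerivWithinAt_nonpos (convex_Ici 0)
      (fun t _ => (hφ t).continuousAt.continuousWithinAt)
      (fun t _ => (hφ t).hasDerivWithinAt)
      (fun t ht => by
        rw [interior_Ici] at ht
        linarith [hslope t (le_of_lt ht)])
  have := hanti Set.self_mem_Ici (Set.mem_Ici.2 zero_le_one) zero_le_one
  simp only [φ, v, one_smul, zero_smul, add_zero, add_sub_cancel] at this
  linarith

theorem Differentiable.sq_norm_gradient_le_of_forall_le (hd : Differentiable ℝ h) (hL : 0 < L)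
    (hlip : ∀ a b, ‖∇ h a - ∇ h b‖ ≤ L * ‖a - b‖) {y : E} (hy : ∀ z, h y ≤ h z) (x : E) :
    ‖∇ h x‖ ^ 2 ≤ 2 * L * (h x - h y) := by
  -- Compare with the gradient step `x - L⁻¹ • ∇ h x`, the minimizer of the quadratic upper bound.
  have hstep := hd.le_add_inner_gradient_add_sq hlip x (x - L⁻¹ • ∇ h x)
  rw [sub_sub_cancel_left, inner_neg_right, real_inner_smul_right, real_inner_self_eq_norm_sq,
    norm_neg, norm_smul, Real.norm_of_nonneg (inv_nonneg.2 hL.le)] at hstep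
  have hdecr : h y ≤ h x - ‖∇ h x‖ ^ 2 / (2 * L) := by
    calc h y ≤ h (x - L⁻¹ • ∇ h x) := hy _
      _ ≤ _ := hstep
      _ = h x - ‖∇ h x‖ ^ 2 / (2 * L) := by field_simp; ring
  rw [le_sub_comm, div_le_iff₀ (by positivity)] at hdecr
  linarith

theorem sq_norm_gradient_le_of_majorant {f G : E → ℝ} (hG : Differentiable ℝ G) (hL : 0 < L)
    (hlip : ∀ a b, ‖∇ G a - ∇ G b‖ ≤ L * ‖a - b‖) (hmaj : ∀ x, f x ≤ G x) {b y : E}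
    (htan : G b = f b) (htangrad : ∇ G b = ∇ f b) (hy : ∀ x, G y ≤ G x) :
    ‖∇ f b‖ ^ 2 ≤ 2 * L * (f b - f y) := by
  calc ‖∇ f b‖ ^ 2 ≤ 2 * L * (f b - G y) := by
        simpa only [htan, htangrad] using hG.sq_norm_gradient_le_of_forall_le hL hlip hy b
    _ ≤ 2 * L * (f b - f y) := by gcongr; exact hmaj y

end Smooth

theorem sum_range_le_mul_sub_of_le_mul_sub_succ {a u : ℕ → ℝ} {c b : ℝ} (hc : 0 ≤ c)
    (hau : ∀ k, a k ≤ c * (u k - u (k + 1))) (hub : ∀ k, b ≤ u k) (n : ℕ) :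
    ∑ k ∈ range n, a k ≤ c * (u 0 - b) :=
  calc ∑ k ∈ range n, a k ≤ ∑ k ∈ range n, c * (u k - u (k + 1)) := sum_le_sum fun k _ => hau k
    _ = c * (u 0 - u n) := by rw [← mul_sum, sum_range_sub']
    _ ≤ c * (u 0 - b) := by gcongr; exact hub n

theorem tendsto_zero_of_sum_range_sq_le {r : ℕ → ℝ} {C : ℝ} (hr : ∀ k, 0 ≤ r k)
    (hC : ∀ n, ∑ k ∈ range n, r k ^ 2 ≤ C) : Tendsto r atTop (𝓝 0) := by
  have hsq := (summable_of_sum_range_le (fun k => sq_nonneg (r k)) hC).tendsto_atTop_zero.sqrt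
  simpa [Real.sqrt_sq (hr _)] using hsq

theorem mm_gradient_sum_bound_general
    (p : ℕ) (L : ℝ) (hL : 0 < L)
    (f : EuclideanSpace ℝ (Fin p) → ℝ)
    (βinf : EuclideanSpace ℝ (Fin p))
    (hmin : ∀ x, f βinf ≤ f x)
    (g : EuclideanSpace ℝ (Fin p) → EuclideanSpace ℝ (Fin p) → ℝ)
    (hgdiff : ∀ banchor, Differentiable ℝ (g banchor))
    (hmaj : ∀ banchor x, f x ≤ g banchor x)
    (htan : ∀ banchor, g banchor banchor = f banchor)
    (htangrad : ∀ banchor, gradient (g banchor) banchor = gradient f banchor)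
    (hlip : ∀ banchor γ δ,
      ‖gradient (g banchor) γ - gradient (g banchor) δ‖ ≤ L * ‖γ - δ‖)
    (β : ℕ → EuclideanSpace ℝ (Fin p))
    (hiter : ∀ k, ∀ x, g (β k) (β (k + 1)) ≤ g (β k) x) :
    (∀ m : ℕ, ∑ k ∈ Finset.range (m + 1), ‖gradient f (β k)‖ ^ 2 ≤
        2 * L * (f (β 0) - f βinf)) ∧
    Filter.Tendsto (fun m => ‖gradient f (β m)‖) Filter.atTop (nhds 0) := by
  have hdecr : ∀ k, ‖∇ f (β k)‖ ^ 2 ≤ 2 * L * (f (β k) - f (β (k + 1))) := fun k =>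
    sq_norm_gradient_le_of_majorant (hgdiff (β k)) hL (hlip (β k)) (hmaj (β k)) (htan (β k))
      (htangrad (β k)) (hiter k)
  have hsum := sum_range_le_mul_sub_of_le_mul_sub_succ (by positivity) hdecr fun k => hmin (β k)
  exact ⟨fun m => hsum (m + 1), tendsto_zero_of_sum_range_sq_le (fun _ => norm_nonneg _) hsum⟩

/-- Sublinear gradient bound for MM iterates: if `f` is differentiable with a
global minimum at `β∞`, each surrogate `g b̄` majorizes `f`, touches it in
value and gradient at its anchor, and has an `L`-Lipschitz gradient uniformly
in the anchor, and each iterate minimizes the current surrogate, then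
`Σ_{k=0}^m ‖∇f(β_k)‖² ≤ 2L [f(β₀) − f(β∞)]`, and `‖∇f(β_m)‖ → 0`. -/
theorem mm_gradient_sum_bound
    (p : ℕ) (L : ℝ) (hL : 0 < L)
    (f : EuclideanSpace ℝ (Fin p) → ℝ)
    (hdiff : Differentiable ℝ f)
    (βinf : EuclideanSpace ℝ (Fin p))
    (hmin : ∀ x, f βinf ≤ f x)
    (g : EuclideanSpace ℝ (Fin p) → EuclideanSpace ℝ (Fin p) → ℝ)
    (hgdiff : ∀ banchor, Differentiable ℝ (g banchor))
    (hmaj : ∀ banchor x, f x ≤ g banchor x)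
    (htan : ∀ banchor, g banchor banchor = f banchor)
    (htangrad : ∀ banchor, gradient (g banchor) banchor = gradient f banchor)
    (hlip : ∀ banchor γ δ,
      ‖gradient (g banchor) γ - gradient (g banchor) δ‖ ≤ L * ‖γ - δ‖)
    (β : ℕ → EuclideanSpace ℝ (Fin p))
    (hiter : ∀ k, ∀ x, g (β k) (β (k + 1)) ≤ g (β k) x) :
    (∀ m : ℕ, ∑ k ∈ Finset.range (m + 1), ‖gradient f (β k)‖ ^ 2 ≤
        2 * L * (f (β 0) - f βinf)) ∧
    Filter.Tendsto (fun m => ‖gradient f (β m)‖) Filter.atTop (nhds 0) :=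
  mm_gradient_sum_bound_general p L hL f βinf hmin g hgdiff hmaj htan htangrad hlip β hiter
end

section
/- Let q ∈ (0,1) and μ > 0, and let ρ_q(r) = (q − 1/2) r + (1/2)|r| be the check function. Then its Moreau envelope satisfies M_{μρ_q}(r) = inf_ν [ ρ_q(ν) + (1/(2μ))(r − ν)² ] = q r − (μ/2)q² if r ≥ qμ; = r²/(2μ) if −(1−q)μ < r < qμ; = −(1−q) r − (μ/2)(1−q)² if r ≤ −(1−q)μ. -/
/-!
The check function is the support function of `[q - 1, q]`: `ρ_q ν = max (q ν) ((q - 1) ν)`,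
so every `a ∈ [q - 1, q]` is a subgradient of `ρ_q` at each point where `ρ_q ν₀ = a ν₀`.
When `a` is a subgradient of `f` at `ν₀ = r - μ a`, completing the square shows that `ν₀`
minimises `f ν + (r - ν)² / (2μ)`. Taking `a = q`, `a = q - 1` and `a = r / μ` (with `ν₀ = 0`)
in the three regimes gives the value `a r - μ a² / 2` of the envelope.
-/

noncomputable section

def moreauEnvelope (μ : ℝ) (f : ℝ → ℝ) (r : ℝ) : ℝ :=
  ⨅ ν : ℝ, f ν + 1 / (2 * μ) * (r - ν) ^ 2

def checkFn (q ν : ℝ) : ℝ :=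
  (q - 1 / 2) * ν + (1 / 2) * |ν|

theorem moreauEnvelope_eq_of_subgradient {μ a r ν₀ : ℝ} {f : ℝ → ℝ} (hμ : 0 < μ)
    (hsub : ∀ ν, f ν₀ + a * (ν - ν₀) ≤ f ν) (hr : r = ν₀ + μ * a) :
    moreauEnvelope μ f r = f ν₀ + μ / 2 * a ^ 2 := by
  subst hr
  have hμ' : μ ≠ 0 := hμ.ne'
  have hmin : f ν₀ + 1 / (2 * μ) * (ν₀ + μ * a - ν₀) ^ 2 = f ν₀ + μ / 2 * a ^ 2 := by
    field_simp
    ring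
  have hlower : ∀ ν, f ν₀ + μ / 2 * a ^ 2 ≤ f ν + 1 / (2 * μ) * (ν₀ + μ * a - ν) ^ 2 := by
    intro ν
    have hsq : 0 ≤ 1 / (2 * μ) * (ν - ν₀) ^ 2 := by positivity
    have hexpand : 1 / (2 * μ) * (ν₀ + μ * a - ν) ^ 2
        = 1 / (2 * μ) * (ν - ν₀) ^ 2 - a * (ν - ν₀) + μ / 2 * a ^ 2 := by
      field_simp
      ring
    linarith [hsub ν]
  exact IsLeast.csInf_eq ⟨⟨ν₀, hmin⟩, Set.forall_mem_range.2 hlower⟩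

section checkFn

variable {q a ν : ℝ}

theorem checkFn_of_nonneg (hν : 0 ≤ ν) : checkFn q ν = q * ν := by
  rw [checkFn, abs_of_nonneg hν]
  ring

theorem checkFn_of_nonpos (hν : ν ≤ 0) : checkFn q ν = (q - 1) * ν := by
  rw [checkFn, abs_of_nonpos hν]
  ring

theorem mul_le_checkFn (ha₀ : q - 1 ≤ a) (ha₁ : a ≤ q) (ν : ℝ) : a * ν ≤ checkFn q ν := by
  rcases le_total 0 ν with hν | hν
  · rw [checkFn_of_nonneg hν]
    exact mul_le_mul_of_nonneg_right ha₁ hν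
  · rw [checkFn_of_nonpos hν]
    exact mul_le_mul_of_nonpos_right ha₀ hν

theorem moreauEnvelope_checkFn {μ r ν₀ : ℝ} (hμ : 0 < μ) (ha₀ : q - 1 ≤ a) (ha₁ : a ≤ q)
    (hν₀ : checkFn q ν₀ = a * ν₀) (hr : r = ν₀ + μ * a) :
    moreauEnvelope μ (checkFn q) r = a * r - μ / 2 * a ^ 2 := by
  have hsub : ∀ ν, checkFn q ν₀ + a * (ν - ν₀) ≤ checkFn q ν := fun ν => by
    linarith [mul_le_checkFn ha₀ ha₁ ν]
  rw [moreauEnvelope_eq_of_subgradient hμ hsub hr, hν₀, hr]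
  ring

end checkFn

end

theorem moreau_envelope_check_function_general (q μ r : ℝ)
    (hμ : 0 < μ) :
    (⨅ ν : ℝ, ((q - 1 / 2) * ν + (1 / 2) * |ν|) + 1 / (2 * μ) * (r - ν) ^ 2) =
      if r ≥ q * μ then q * r - μ / 2 * q ^ 2
      else if r ≤ -((1 - q) * μ) then -((1 - q) * r) - μ / 2 * (1 - q) ^ 2
      else r ^ 2 / (2 * μ) := by
  change moreauEnvelope μ (checkFn q) r = _
  split_ifs with hupper hlower
  · exact moreauEnvelope_checkFn hμ (by linarith) le_rfl
      (checkFn_of_nonneg (by linarith)) (by ring : r = (r - μ * q) + μ * q)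
  · rw [moreauEnvelope_checkFn hμ le_rfl (by linarith)
      (checkFn_of_nonpos (by linarith)) (by ring : r = (r - μ * (q - 1)) + μ * (q - 1))]
    ring
  · rw [not_le] at hupper hlower
    have hμ' : μ ≠ 0 := hμ.ne'
    rw [moreauEnvelope_checkFn (a := r / μ) (ν₀ := 0) hμ
      (by rw [le_div_iff₀ hμ]; linarith) (by rw [div_le_iff₀ hμ]; linarith)
      (by simp [checkFn]) (by rw [zero_add, mul_div_cancel₀ r hμ'])]
    field_simp
    ring

/-- The Moreau envelope of the check function `ρ_q(r) = (q − 1/2)r + (1/2)|r|`: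
for `q ∈ (0,1)` and `μ > 0`,
`M_{μρ_q}(r) = qr − (μ/2)q²` if `r ≥ qμ`, `r²/(2μ)` if `−(1−q)μ < r < qμ`,
and `−(1−q)r − (μ/2)(1−q)²` if `r ≤ −(1−q)μ`. -/
theorem moreau_envelope_check_function (q μ r : ℝ)
    (hq0 : 0 < q) (hq1 : q < 1) (hμ : 0 < μ) :
    (⨅ ν : ℝ, ((q - 1 / 2) * ν + (1 / 2) * |ν|) + 1 / (2 * μ) * (r - ν) ^ 2) =
      if r ≥ q * μ then q * r - μ / 2 * q ^ 2
      else if r ≤ -((1 - q) * μ) then -((1 - q) * r) - μ / 2 * (1 - q) ^ 2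
      else r ^ 2 / (2 * μ) :=
  moreau_envelope_check_function_general q μ r hμ
end

section
/- (Deweighting majorization of Heiser and Kiers.) Let y, μ, μ_m ∈ ℝ and let w ∈ [0,1]. Then w (y − μ)² ≤ [w y + (1 − w) μ_m − μ]² + w(1 − w)(y − μ_m)², with equality when μ = μ_m. Consequently, for weights w_{mi} ∈ [0,1], the weighted least squares criterion (1/2) Σ_i w_{mi}(y_i − μ_i)² is majorized at μ_i = μ_{mi} by the unweighted criterion (1/2) Σ_i [w_{mi} y_i + (1 − w_{mi}) μ_{mi} − μ_i]² + c_m, where c_m = (1/2) Σ_i w_{mi}(1 − w_{mi})(y_i − μ_{mi})² does not depend on the μ_i. -/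
/-- Deweighting majorization of Heiser and Kiers. Scalar form:
for `w ∈ [0,1]`, `w(y − μ)² ≤ [wy + (1 − w)μ_m − μ]² + w(1 − w)(y − μ_m)²`,
with equality at `μ = μ_m`. Summed form: the weighted least squares criterion
is majorized at the anchor by the unweighted criterion plus a constant. -/
theorem deweighting_majorization :
    (∀ y μm w : ℝ, 0 ≤ w → w ≤ 1 →
      (∀ μ' : ℝ, w * (y - μ') ^ 2 ≤
        (w * y + (1 - w) * μm - μ') ^ 2 + w * (1 - w) * (y - μm) ^ 2) ∧
      w * (y - μm) ^ 2 =
        (w * y + (1 - w) * μm - μm) ^ 2 + w * (1 - w) * (y - μm) ^ 2) ∧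
    (∀ (n : ℕ) (y μm w : Fin n → ℝ), (∀ i, 0 ≤ w i) → (∀ i, w i ≤ 1) →
      (∀ μv : Fin n → ℝ,
        (1 / 2) * ∑ i, w i * (y i - μv i) ^ 2 ≤
          (1 / 2) * ∑ i, (w i * y i + (1 - w i) * μm i - μv i) ^ 2 +
            (1 / 2) * ∑ i, w i * (1 - w i) * (y i - μm i) ^ 2) ∧
      (1 / 2) * ∑ i, w i * (y i - μm i) ^ 2 =
        (1 / 2) * ∑ i, (w i * y i + (1 - w i) * μm i - μm i) ^ 2 +
          (1 / 2) * ∑ i, w i * (1 - w i) * (y i - μm i) ^ 2) := by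
  have key : ∀ y μm w : ℝ, 0 ≤ w → w ≤ 1 → ∀ μ' : ℝ,
      w * (y - μ') ^ 2 ≤
        (w * y + (1 - w) * μm - μ') ^ 2 + w * (1 - w) * (y - μm) ^ 2 := by
    intro y μm w hw hw1 μ'
    nlinarith [sq_nonneg (μm - μ'), mul_nonneg hw (sub_nonneg.2 hw1),
      mul_nonneg (mul_nonneg hw (sub_nonneg.2 hw1)) (sq_nonneg (μm - μ'))]
  constructor
  · intro y μm w hw hw1
    refine ⟨key y μm w hw hw1, by ring⟩
  · intro n y μm w hw hw1
    constructor
    · intro μv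
      rw [← mul_add, ← Finset.sum_add_distrib]
      apply mul_le_mul_of_nonneg_left _ (by norm_num)
      exact Finset.sum_le_sum fun i _ => key (y i) (μm i) (w i) (hw i) (hw1 i) (μv i)
    · rw [← mul_add, ← Finset.sum_add_distrib]
      congr 1
      exact Finset.sum_congr rfl fun i _ => by ring
end

section
/- Let μ > 0 and r_m ∈ ℝ, and set w = 1 if |r_m| ≤ μ and w = μ/|r_m| if |r_m| > μ (the weight of the sharpest quadratic majorization of Huber's function at r_m). Then (1 − w) r_m = prox_{μ|·|}(r_m) = (1 − μ/max{|r_m|, μ}) r_m. Consequently, for any y, μ̄_m, μ̄ ∈ ℝ with r_m = y − μ̄_m and r = y − μ̄, the deweighted surrogate matches the Moreau-envelope surrogate exactly: [w y + (1 − w) μ̄_m − μ̄]² = [r − prox_{μ|·|}(r_m)]². -/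
/-- Deweighting the sharpest quadratic (Huber) majorization recovers the
Moreau-envelope surrogate: with weight `w = 1` if `|r_m| ≤ μ` and
`w = μ/|r_m|` otherwise, one has `(1 − w) r_m = prox_{μ|·|}(r_m)
= (1 − μ/max{|r_m|, μ}) r_m`, and the deweighted shifted response matches the
Moreau surrogate exactly. -/
theorem deweighting_matches_moreau (μ rm : ℝ) (hμ : 0 < μ) :
    ∀ w : ℝ, w = (if |rm| ≤ μ then 1 else μ / |rm|) →
      ((1 - w) * rm = (1 - μ / max |rm| μ) * rm ∧
       ∀ y μbarm μbar : ℝ, rm = y - μbarm →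
        (w * y + (1 - w) * μbarm - μbar) ^ 2 =
          ((y - μbar) - (1 - μ / max |rm| μ) * rm) ^ 2) := by
  intro w hw
  have key : (1 - w) * rm = (1 - μ / max |rm| μ) * rm := by
    by_cases h : |rm| ≤ μ
    · simp [hw, h, max_eq_right h, div_self hμ.ne']
    · rw [hw, if_neg h, max_eq_left (le_of_lt (not_le.mp h))]
  refine ⟨key, fun y μbarm μbar hrm => ?_⟩
  have : w * y + (1 - w) * μbarm - μbar = (y - μbar) - (1 - w) * rm := by
    rw [hrm]; ring
  rw [this, key]
end

section
/- (Sharpest quadratic majorization of Huber's function.) Let μ > 0 and let M_{μ|·|}(r) = r²/(2μ) for |r| ≤ μ and M_{μ|·|}(r) = |r| − μ/2 for |r| > μ. Fix an anchor r_m ∈ ℝ. If |r_m| < μ, then M_{μ|·|}(r) ≤ r²/(2μ) for all r ∈ ℝ, with equality at r = r_m. If r_m ≥ μ, then M_{μ|·|}(r) ≤ (r − r_m)²/(2|r_m|) + r − μ/2 for all r ∈ ℝ, with equality at r = r_m. If r_m ≤ −μ, then M_{μ|·|}(r) ≤ (r − r_m)²/(2|r_m|) − r − μ/2 for all r ∈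 ℝ, with equality at r = r_m. -/
/-- Sharpest quadratic majorization of Huber's function
`M(r) = r²/(2μ)` for `|r| ≤ μ`, `M(r) = |r| − μ/2` for `|r| > μ`:
at anchor `r_m`, the indicated quadratics dominate `M` everywhere and agree
with `M` at `r_m`, in each of the three cases `|r_m| < μ`, `r_m ≥ μ`,
`r_m ≤ −μ`. -/
theorem huber_sharpest_quadratic_majorization (μ rm : ℝ) (hμ : 0 < μ) :
    ∀ M : ℝ → ℝ, (∀ r, M r = if |r| ≤ μ then r ^ 2 / (2 * μ) else |r| - μ / 2) →
      ((|rm| < μ →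
        (∀ r, M r ≤ r ^ 2 / (2 * μ)) ∧ M rm = rm ^ 2 / (2 * μ)) ∧
       (rm ≥ μ →
        (∀ r, M r ≤ (r - rm) ^ 2 / (2 * |rm|) + r - μ / 2) ∧
        M rm = (rm - rm) ^ 2 / (2 * |rm|) + rm - μ / 2) ∧
       (rm ≤ -μ →
        (∀ r, M r ≤ (r - rm) ^ 2 / (2 * |rm|) - r - μ / 2) ∧
        M rm = (rm - rm) ^ 2 / (2 * |rm|) - rm - μ / 2)) := by
  intro M hM
  refine ⟨?_, ?_, ?_⟩
  · intro h
    constructor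
    · intro r
      rw [hM r]
      split_ifs with hr
      · exact le_refl _
      · push_neg at hr
        have ha : 0 ≤ |r| := abs_nonneg r
        have hsq : |r| ^ 2 = r ^ 2 := sq_abs r
        have h1 : 0 ≤ (r ^ 2 - 2 * μ * |r| + μ ^ 2) / (2 * μ) :=
          div_nonneg (by nlinarith [sq_nonneg (|r| - μ)]) (by positivity)
        have h2 : (r ^ 2 - 2 * μ * |r| + μ ^ 2) / (2 * μ)
            = r ^ 2 / (2 * μ) - (|r| - μ / 2) := by
          field_simp; ring
        linarith [h2 ▸ h1]
    · rw [hM rm, if_pos h.le]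
  · intro h
    have hrm : 0 < rm := lt_of_lt_of_le hμ h
    have habs : |rm| = rm := abs_of_pos hrm
    constructor
    · intro r
      rw [hM r, habs]
      have ha : 0 ≤ |r| := abs_nonneg r
      have hsq : |r| ^ 2 = r ^ 2 := sq_abs r
      split_ifs with hr
      · have hr2 : r ^ 2 ≤ μ ^ 2 := by nlinarith [neg_abs_le r, le_abs_self r]
        have hA : (0:ℝ) ≤ rm - μ := by linarith
        have hB : (0:ℝ) ≤ μ * rm - r ^ 2 := by nlinarith
        have h1 : 0 ≤ (2 * (rm - μ) * (μ * rm - r ^ 2)) / (2 * μ * (2 * rm)) :=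
          div_nonneg (by nlinarith [mul_nonneg hA hB]) (by positivity)
        have h2 : (2 * (rm - μ) * (μ * rm - r ^ 2)) / (2 * μ * (2 * rm))
            = ((r - rm) ^ 2 / (2 * rm) + r - μ / 2) - r ^ 2 / (2 * μ) := by
          field_simp; ring
        linarith [h2 ▸ h1]
      · have h1 : 0 ≤ (|r| - rm) ^ 2 / (2 * rm) :=
          div_nonneg (sq_nonneg _) (by positivity)
        have h2 : (|r| - rm) ^ 2 / (2 * rm)
            = ((r - rm) ^ 2 / (2 * rm) + r - μ / 2) - (|r| - μ / 2) := by
          rw [sub_sq, hsq]; field_simp; ring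
        linarith [h2 ▸ h1]
    · rw [hM rm, habs]
      rcases eq_or_lt_of_le h with heq | hlt
      · rw [if_pos (by linarith)]
        rw [← heq]
        field_simp; ring
      · rw [if_neg (by push_neg; linarith)]
        simp
  · intro h
    have hrm : rm < 0 := lt_of_le_of_lt h (by linarith)
    have habs : |rm| = -rm := abs_of_neg hrm
    constructor
    · intro r
      rw [hM r, habs]
      have ha : 0 ≤ |r| := abs_nonneg r
      have hsq : |r| ^ 2 = r ^ 2 := sq_abs r
      split_ifs with hr
      · have hr2 : r ^ 2 ≤ μ ^ 2 := by nlinarith [neg_abs_le r, le_abs_self r]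
        have hA : (0:ℝ) ≤ -(μ + rm) := by linarith
        have hB : (0:ℝ) ≤ -(r ^ 2 + μ * rm) := by nlinarith
        have hneg : (0:ℝ) < -rm := by linarith
        have hrm0 : rm ≠ 0 := ne_of_lt hrm
        have h1 : 0 ≤ (2 * (-(μ + rm)) * (-(r ^ 2 + μ * rm))) / (2 * μ * (2 * -rm)) :=
          div_nonneg (by nlinarith [mul_nonneg hA hB]) (by positivity)
        have h2 : (2 * (-(μ + rm)) * (-(r ^ 2 + μ * rm))) / (2 * μ * (2 * -rm))
            = ((r - rm) ^ 2 / (2 * -rm) - r - μ / 2) - r ^ 2 / (2 * μ) := by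
          field_simp; ring
        linarith [h2 ▸ h1]
      · have hneg : (0:ℝ) < -rm := by linarith
        have hrm0 : rm ≠ 0 := ne_of_lt hrm
        have h1 : 0 ≤ (|r| + rm) ^ 2 / (2 * -rm) :=
          div_nonneg (sq_nonneg _) (by positivity)
        have h2 : (|r| + rm) ^ 2 / (2 * -rm)
            = ((r - rm) ^ 2 / (2 * -rm) - r - μ / 2) - (|r| - μ / 2) := by
          rw [add_sq, hsq]; field_simp; ring
        linarith [h2 ▸ h1]
    · rw [hM rm, habs]
      rcases eq_or_lt_of_le h with heq | hlt
      · rw [if_pos (by linarith)]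
        rw [heq]
        field_simp; ring
      · rw [if_neg (by push_neg; linarith)]
        simp
end

section
/- (Böhning's multinomial curvature bound.) Let c ≥ 2 and r ∈ ℝ^{c−1}, and define the multinomial probabilities w_j = e^{r_j}/(1 + Σ_{k=1}^{c−1} e^{r_k}) for j = 1, …, c−1. Then for every v ∈ ℝ^{c−1}, Σ_{j=1}^{c−1} w_j v_j² − (Σ_{j=1}^{c−1} w_j v_j)² ≤ (1/2)[ Σ_{j=1}^{c−1} v_j² − (1/c)(Σ_{j=1}^{c−1} v_j)² ]; equivalently, the matrix (1/2)(I − (1/c)𝟙𝟙ᵀ) − (diag(w) − w wᵀ) is positive semidefinite, where 𝟙 ∈ ℝ^{c−1} is the all-ones vector. -/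
/-!
Put the reference category back as an index `0` with weight `1 - ∑ w` and score `0`. The left side
becomes the variance of a score `u` under a probability vector on `c` points, and the right side
half the sum of squared deviations of `u` from its unweighted mean. By Popoviciu's inequality the
variance is at most `(max u - min u)² / 4`, while the deviations of the maximum and the minimum
alone already contribute at least `(max u - min u)² / 2`.
-/

open Matrix Finset MeasureTheory ProbabilityTheory

section WeightedVariance

variable {ι : Type*} [Fintype ι]

theorem sum_mul_sq_sub_sq_sum_mul_le {p u : ι → ℝ} {a b : ℝ} (hp0 : ∀ i, 0 ≤ p i)
    (hp1 : ∑ i, p i = 1) (hu : ∀ i, u i ∈ Set.Icc a b) :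
    ∑ i, p i * u i ^ 2 - (∑ i, p i * u i) ^ 2 ≤ ((b - a) / 2) ^ 2 := by
  let _ : MeasurableSpace ι := ⊤
  let P : PMF ι := .ofFintype (fun i ↦ .ofReal (p i)) <| by
    rw [← ENNReal.ofReal_sum_of_nonneg fun i _ ↦ hp0 i, hp1, ENNReal.ofReal_one]
  have integral_eq (f : ι → ℝ) : ∫ i, f i ∂P.toMeasure = ∑ i, p i * f i := by
    simp [P, PMF.integral_eq_sum, ENNReal.toReal_ofReal (hp0 _)]
  have := variance_le_sq_of_bounded (μ := P.toMeasure) (ae_of_all _ hu)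
    (measurable_of_finite u).aemeasurable
  rwa [variance_eq_sub MemLp.of_discrete, integral_eq, integral_eq] at this

theorem sum_sq_sub_sq_sum_div_card_eq_sum_sq_sub_mean [Nonempty ι] (u : ι → ℝ) :
    ∑ i, u i ^ 2 - (∑ i, u i) ^ 2 / Fintype.card ι =
      ∑ i, (u i - (∑ j, u j) / Fintype.card ι) ^ 2 := by
  have hcard : (Fintype.card ι : ℝ) ≠ 0 := Nat.cast_ne_zero.2 Fintype.card_ne_zero
  simp only [sub_sq, sum_add_distrib, sum_sub_distrib, ← sum_mul, ← mul_sum, sum_const,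
    card_univ, nsmul_eq_mul]
  field_simp
  ring

theorem sq_sub_le_two_mul_sum_sq_sub_sq_sum_div_card (u : ι → ℝ) (a b : ι) :
    (u a - u b) ^ 2 ≤ 2 * (∑ i, u i ^ 2 - (∑ i, u i) ^ 2 / Fintype.card ι) := by
  classical
  have : Nonempty ι := ⟨a⟩
  set m := (∑ j, u j) / Fintype.card ι
  rw [sum_sq_sub_sq_sum_div_card_eq_sum_sq_sub_mean]
  obtain rfl | hab := eq_or_ne a b
  · simpa using sum_nonneg fun i _ ↦ sq_nonneg (u i - m)
  have hpair : (u a - m) ^ 2 + (u b - m) ^ 2 ≤ ∑ i, (u i - m) ^ 2 := by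
    rw [← sum_pair (f := fun i ↦ (u i - m) ^ 2) hab]
    exact sum_le_sum_of_subset_of_nonneg (subset_univ _) fun i _ _ ↦ sq_nonneg _
  nlinarith [sq_nonneg (u a + u b - 2 * m)]

theorem sum_mul_sq_sub_sq_sum_mul_le_half {p : ι → ℝ} (hp0 : ∀ i, 0 ≤ p i)
    (hp1 : ∑ i, p i = 1) (u : ι → ℝ) :
    ∑ i, p i * u i ^ 2 - (∑ i, p i * u i) ^ 2 ≤
      1 / 2 * (∑ i, u i ^ 2 - (∑ i, u i) ^ 2 / Fintype.card ι) := by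
  obtain ⟨i₀, -, -⟩ := exists_ne_zero_of_sum_ne_zero (hp1 ▸ one_ne_zero)
  have : Nonempty ι := ⟨i₀⟩
  obtain ⟨a, ha⟩ := Finite.exists_max u
  obtain ⟨b, hb⟩ := Finite.exists_min u
  calc ∑ i, p i * u i ^ 2 - (∑ i, p i * u i) ^ 2
      ≤ ((u a - u b) / 2) ^ 2 := sum_mul_sq_sub_sq_sum_mul_le hp0 hp1 fun i ↦ ⟨hb i, ha i⟩
    _ ≤ _ := by linarith [sq_sub_le_two_mul_sum_sq_sub_sq_sum_div_card u a b]

end WeightedVariance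

theorem sum_mul_sq_sub_sq_sum_mul_le_half_of_sum_le_one {n : ℕ} {w : Fin n → ℝ}
    (hw0 : ∀ j, 0 ≤ w j) (hw1 : ∑ j, w j ≤ 1) (v : Fin n → ℝ) :
    ∑ j, w j * v j ^ 2 - (∑ j, w j * v j) ^ 2 ≤
      1 / 2 * (∑ j, v j ^ 2 - (∑ j, v j) ^ 2 / (n + 1)) := by
  have hp0 : ∀ i, 0 ≤ (Fin.cons (1 - ∑ j, w j) w : Fin (n + 1) → ℝ) i :=
    Fin.cases (sub_nonneg.2 hw1) hw0
  have hp1 : ∑ i, (Fin.cons (1 - ∑ j, w j) w : Fin (n + 1) → ℝ) i = 1 := by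
    simp [Fin.sum_univ_succ]
  simpa [Fin.sum_univ_succ] using
    sum_mul_sq_sub_sq_sum_mul_le_half hp0 hp1 (Fin.cons 0 v : Fin (n + 1) → ℝ)

section BohningGap

variable {ι : Type*} [DecidableEq ι]

/-- Böhning's bound `(1/2)(I - t 𝟙𝟙ᵀ)`, with `t = 1 / c`, minus the negative Hessian of the
multinomial loglikelihood. -/
noncomputable def bohningGap (t : ℝ) (w : ι → ℝ) : Matrix ι ι ℝ :=
  (1 / 2 : ℝ) • (1 - t • of fun _ _ ↦ 1) - (diagonal w - vecMulVec w w)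

theorem isHermitian_bohningGap (t : ℝ) (w : ι → ℝ) : (bohningGap t w).IsHermitian :=
  IsHermitian.ext fun i j ↦ by
    by_cases h : i = j <;> simp [bohningGap, h, vecMulVec_apply, one_apply, mul_comm, eq_comm]

theorem dotProduct_bohningGap_mulVec [Fintype ι] (t : ℝ) (w x : ι → ℝ) :
    x ⬝ᵥ (bohningGap t w *ᵥ x) =
      1 / 2 * (∑ i, x i ^ 2 - t * (∑ i, x i) ^ 2) -
        (∑ i, w i * x i ^ 2 - (∑ i, w i * x i) ^ 2) := by
  have hones : (of fun _ _ ↦ 1 : Matrix ι ι ℝ) = vecMulVec 1 1 := by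
    ext; simp [vecMulVec_apply]
  simp only [bohningGap, hones, sub_mulVec, smul_mulVec, one_mulVec, vecMulVec_mulVec,
    dotProduct_sub, dotProduct_smul, op_smul_eq_smul, smul_eq_mul, dotProduct_one, one_dotProduct]
  simp only [dotProduct, mulVec_diagonal, sq, mul_comm, mul_left_comm]

end BohningGap

/-- Böhning's multinomial curvature bound: with probabilities
`w_j = e^{r_j}/(1 + Σ_k e^{r_k})`, for every `v`,
`Σ_j w_j v_j² − (Σ_j w_j v_j)² ≤ (1/2)[Σ_j v_j² − (1/c)(Σ_j v_j)²]`;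
equivalently `(1/2)(I − (1/c)𝟙𝟙ᵀ) − (diag(w) − wwᵀ)` is positive
semidefinite. -/
theorem bohning_multinomial_curvature_bound
    (c : ℕ) (hc : 2 ≤ c) (r : Fin (c - 1) → ℝ)
    (w : Fin (c - 1) → ℝ)
    (hw : ∀ j, w j = Real.exp (r j) / (1 + ∑ k, Real.exp (r k))) :
    (∀ v : Fin (c - 1) → ℝ,
      ∑ j, w j * v j ^ 2 - (∑ j, w j * v j) ^ 2 ≤
        (1 / 2) * (∑ j, v j ^ 2 - (1 / (c : ℝ)) * (∑ j, v j) ^ 2)) ∧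
    ((1 / 2 : ℝ) • ((1 : Matrix (Fin (c - 1)) (Fin (c - 1)) ℝ) -
        (1 / (c : ℝ)) • Matrix.of (fun _ _ => (1 : ℝ))) -
      (Matrix.diagonal w - Matrix.vecMulVec w w)).PosSemidef := by
  have hden : 0 < 1 + ∑ k, Real.exp (r k) := by positivity
  have hw0 : ∀ j, 0 ≤ w j := fun j ↦ hw j ▸ by positivity
  have hw1 : ∑ j, w j ≤ 1 := by
    simp only [hw, ← sum_div]
    rw [div_le_one hden]
    linarith
  have hcard : ((c - 1 : ℕ) : ℝ) + 1 = c := by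
    rw [Nat.cast_sub (by omega)]
    ring
  have hvar (v : Fin (c - 1) → ℝ) :
      ∑ j, w j * v j ^ 2 - (∑ j, w j * v j) ^ 2 ≤
        1 / 2 * (∑ j, v j ^ 2 - 1 / (c : ℝ) * (∑ j, v j) ^ 2) := by
    rw [one_div_mul_eq_div (c : ℝ), ← hcard]
    exact sum_mul_sq_sub_sq_sum_mul_le_half_of_sum_le_one hw0 hw1 v
  refine ⟨hvar, posSemidef_iff_dotProduct_mulVec.2 ⟨isHermitian_bohningGap _ w, fun x ↦ ?_⟩⟩
  rw [star_trivial]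
  exact (sub_nonneg.2 (hvar x)).trans_eq (dotProduct_bohningGap_mulVec _ w x).symm
end
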